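/- arXiv:1906.03646 — 2 statements merged into one kernel-verified Lean document; each statement's English description precedes it below -/
import Mathlib

section
/- Let B_n and C_n denote the type B and type C root systems sharing the hyperoctahedral Weyl group 𝔅_n, with simple roots β_1,…,β_n and γ_1,…,γ_n respectively, related by the substitution γ_1 ↦ 2β_1 and γ_i ↦ β_i for i > 1. Then for all w, x ∈ 𝔅_n, applying this substitution to the type-C Billey restriction gives: substituted ξ_w^C|_x = 2^{s(w)} · ξ_w^B|_x, where s(w) is the number of negative entries of the signed permutation w. -/
/-!
Rescaling the first simple root by `2` turns the Cartan matrix of `C_n` into that of `B_n`, so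
`x ↦ d • x` with `d = (2, 1, …, 1)` intertwines the two reflection representations and sends each
type-`C` root `s_{a_1} ⋯ s_{a_{k-1}}(γ_{a_k})` to `d_{a_k}` times the corresponding type-`B` root.
Hence the term of Billey's sum indexed by a reduced subword `J` for `w` is multiplied by
`∏_{k ∈ J} d_{a_k} = 2^(number of s_1 in J) = 2^(s w)`.
-/

open CoxeterSystem MvPolynomial

section Defs

variable {B : Type} [DecidableEq B] {W : Type} [Group W] {M : CoxeterMatrix B}

/-- The simple reflection action on the root lattice determined by the "Cartan" integers `A`:
`s_i` sends `α_j ↦ α_j - (A i j) • α_i` (extended linearly, where `α_j = single j 1`). -/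
noncomputable def cartanRefl (A : B → B → ℤ) (i : B) (x : B →₀ ℤ) : B →₀ ℤ :=
  x - (x.sum fun j c => c * A i j) • Finsupp.single i 1

/-- The action of the word `s_{a_1} s_{a_2} ⋯ s_{a_m}` on the root lattice. -/
noncomputable def wordAct (A : B → B → ℤ) (l : List B) (x : B →₀ ℤ) : B →₀ ℤ :=
  l.foldr (cartanRefl A) x

/-- The root `s_{a_1} ⋯ s_{a_{k-1}} (α_{a_k})` attached to position `k` of the word
`l = (a_1, …, a_m)`. -/
noncomputable def rootOf (A : B → B → ℤ) (l : List B) (k : Fin l.length) : B →₀ ℤ :=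
  wordAct A (l.take k) (Finsupp.single (l.get k) 1)

/-- A vector of the root lattice is positive if it is nonzero with nonnegative coordinates
in the simple roots. -/
def IsPosRoot (x : B →₀ ℤ) : Prop := x ≠ 0 ∧ ∀ j, 0 ≤ x j

/-- Interpret a root-lattice vector `Σ c_i α_i` as the linear polynomial `Σ c_i X_i` in
`ℤ[α_1, …, α_r]`. -/
noncomputable def toPoly (x : B →₀ ℤ) : MvPolynomial B ℤ := x.sum fun i c => c • X i

/-- `l` is a reduced word for `w`. -/
def IsReducedWordFor (cs : CoxeterSystem M W) (l : List B) (w : W) : Prop :=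
  cs.IsReduced l ∧ cs.wordProd l = w

/-- The subword of `l` occupying the set of positions `J`. -/
def select (l : List B) (J : Finset (Fin l.length)) : List B :=
  ((List.finRange l.length).filter (· ∈ J)).map l.get

open Classical in
/-- Billey's restriction `ξ_w|_v`, computed from a word `l` (a reduced word for `v`):
the sum over all subwords `J ⊆ {1, …, ℓ}` of `l` that are reduced words for `w` of
`∏_{k ∈ J} s_{a_1} ⋯ s_{a_{k-1}} (α_{a_k})`. -/
noncomputable def billey (cs : CoxeterSystem M W) (A : B → B → ℤ) (w : W) (l : List B) :
    MvPolynomial B ℤ :=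
  ∑ J : Finset (Fin l.length),
    if IsReducedWordFor cs (select l J) w then ∏ k ∈ J, toPoly (rootOf A l k) else 0

/-- Bruhat order on `W`, via the subword property. -/
def bruhatLE (cs : CoxeterSystem M W) (u v : W) : Prop :=
  ∃ lv, IsReducedWordFor cs lv v ∧ ∃ lu, lu.Sublist lv ∧ IsReducedWordFor cs lu u

end Defs

section TypeBC

/-- The Coxeter matrix shared by the root systems `B_n` and `C_n` (hyperoctahedral Weyl
group): the bond between nodes 1 and 2 (indices 0 and 1) is a 4-bond, consecutive nodes
otherwise have 3-bonds. -/
def BCMatrix (n : ℕ) : CoxeterMatrix (Fin n) where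
  M := Matrix.of fun i j : Fin n =>
    if i = j then 1
      else if ((i : ℕ) = 0 ∧ (j : ℕ) = 1) ∨ ((j : ℕ) = 0 ∧ (i : ℕ) = 1) then 4
      else if (j : ℕ) + 1 = i ∨ (i : ℕ) + 1 = j then 3 else 2
  isSymm := by unfold Matrix.IsSymm; aesop
  diagonal := by simp
  off_diagonal := by aesop

/-- The Cartan integers of type `B_n` (simple roots `β_1, …, β_n`, with `β_1` short):
`s_i (β_j) = β_j - (cartanB n i j) • β_i`; in particular `s_1 (β_2) = β_2 + 2 β_1`. -/
def cartanB (n : ℕ) (i j : Fin n) : ℤ :=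
  if i = j then 2
    else if (i : ℕ) = 0 ∧ (j : ℕ) = 1 then -2
    else if (j : ℕ) + 1 = i ∨ (i : ℕ) + 1 = j then -1 else 0

/-- The Cartan integers of type `C_n` (simple roots `γ_1, …, γ_n`, with `γ_1` long):
`s_i (γ_j) = γ_j - (cartanC n i j) • γ_i`; in particular `s_2 (γ_1) = γ_1 + 2 γ_2`. -/
def cartanC (n : ℕ) (i j : Fin n) : ℤ :=
  if i = j then 2
    else if (i : ℕ) = 1 ∧ (j : ℕ) = 0 then -2
    else if (j : ℕ) + 1 = i ∨ (i : ℕ) + 1 = j then -1 else 0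

/-- The substitution `γ_1 ↦ 2 β_1`, `γ_i ↦ β_i` for `i > 1`, as an algebra endomorphism of
`ℤ[X_1, …, X_n]`. -/
noncomputable def barSub (n : ℕ) : MvPolynomial (Fin n) ℤ →ₐ[ℤ] MvPolynomial (Fin n) ℤ :=
  MvPolynomial.bind₁ fun i : Fin n =>
    if (i : ℕ) = 0 then 2 * MvPolynomial.X i else MvPolynomial.X i

end TypeBC

section Rescaling

variable {B : Type}

theorem cartanRefl_apply (A : B → B → ℤ) (i : B) (x : B →₀ ℤ) (j : B) :
    cartanRefl A i x j = x j - (x.sum fun k c => c * A i k) * Finsupp.single i 1 j := by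
  simp only [cartanRefl, Finsupp.coe_sub, Pi.sub_apply, Finsupp.smul_apply, smul_eq_mul]

theorem cartanRefl_smul (A : B → B → ℤ) (i : B) (c : ℤ) (x : B →₀ ℤ) :
    cartanRefl A i (c • x) = c • cartanRefl A i x := by
  have hsum : ((c • x).sum fun k a => a * A i k) = c * x.sum fun k a => a * A i k := by
    rw [Finsupp.sum_smul_index (by simp), Finsupp.mul_sum]
    simp only [mul_assoc]
  ext j
  simp only [cartanRefl_apply, hsum, Finsupp.smul_apply, smul_eq_mul]
  ring

theorem wordAct_smul (A : B → B → ℤ) (l : List B) (c : ℤ) (x : B →₀ ℤ) :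
    wordAct A l (c • x) = c • wordAct A l x := by
  induction l with
  | nil => rfl
  | cons a t ih => exact (congrArg (cartanRefl A a) ih).trans (cartanRefl_smul A a c _)

theorem pointwise_smul_apply (d : B → ℤ) (x : B →₀ ℤ) (j : B) : (d • x) j = d j * x j := rfl

theorem support_pointwise_smul_subset (d : B → ℤ) (x : B →₀ ℤ) :
    (d • x).support ⊆ x.support := fun k hk => by
  rw [Finsupp.mem_support_iff, pointwise_smul_apply] at hk
  exact Finsupp.mem_support_iff.2 (right_ne_zero_of_mul hk)

theorem pointwise_smul_single_one (d : B → ℤ) (i : B) :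
    d • Finsupp.single i (1 : ℤ) = d i • Finsupp.single i 1 := by
  ext j
  by_cases hij : i = j
  · subst hij; simp [pointwise_smul_apply]
  · simp [pointwise_smul_apply, hij]

variable {A A' : B → B → ℤ} {d : B → ℤ}

/-- `A i j * d j = d i * A' i j` says `A = D A' D⁻¹` with `D = diag d`: the root system of `A`
is that of `A'` with the simple roots rescaled by `d`. -/
theorem cartanRefl_pointwise_smul (hd : ∀ i j, A i j * d j = d i * A' i j) (i : B)
    (x : B →₀ ℤ) : cartanRefl A i (d • x) = d • cartanRefl A' i x := by
  have hsum : ((d • x).sum fun k c => c * A i k) = d i * x.sum fun k c => c * A' i k := by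
    rw [Finsupp.sum_of_support_subset _ (support_pointwise_smul_subset d x) _ (by simp),
      Finsupp.sum, Finset.mul_sum]
    refine Finset.sum_congr rfl fun k _ => ?_
    rw [pointwise_smul_apply]
    linear_combination x k * hd i k
  ext j
  rw [cartanRefl_apply, hsum, pointwise_smul_apply, pointwise_smul_apply, cartanRefl_apply]
  by_cases hij : i = j
  · subst hij; simp only [Finsupp.single_eq_same]; ring
  · simp [hij]

theorem wordAct_pointwise_smul (hd : ∀ i j, A i j * d j = d i * A' i j) (l : List B)
    (x : B →₀ ℤ) : wordAct A l (d • x) = d • wordAct A' l x := by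
  induction l with
  | nil => rfl
  | cons a t ih =>
    exact (congrArg (cartanRefl A a) ih).trans (cartanRefl_pointwise_smul hd a _)

theorem pointwise_smul_rootOf (hd : ∀ i j, A i j * d j = d i * A' i j) (l : List B)
    (k : Fin l.length) : d • rootOf A' l k = d (l.get k) • rootOf A l k := by
  rw [rootOf, rootOf, ← wordAct_pointwise_smul hd, pointwise_smul_single_one, wordAct_smul]

theorem toPoly_smul (c : ℤ) (x : B →₀ ℤ) : toPoly (c • x) = c * toPoly x := by
  rw [toPoly, toPoly, Finsupp.sum_smul_index (by simp), Finsupp.mul_sum]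
  simp only [zsmul_eq_mul, Int.cast_mul, mul_assoc]

theorem bind₁_intCast_mul_X_toPoly (d : B → ℤ) (x : B →₀ ℤ) :
    bind₁ (fun i => (d i : MvPolynomial B ℤ) * X i) (toPoly x) = toPoly (d • x) := by
  rw [toPoly, toPoly, map_finsuppSum,
    Finsupp.sum_of_support_subset _ (support_pointwise_smul_subset d x) _ (by simp), Finsupp.sum]
  refine Finset.sum_congr rfl fun k _ => ?_
  simp only [map_mul, map_intCast, bind₁_X_right, pointwise_smul_apply, zsmul_eq_mul, Int.cast_mul]
  ring

end Rescaling

theorem prod_map_select {B M : Type} [CommMonoid M] (f : B → M) (l : List B)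
    (J : Finset (Fin l.length)) : ((select l J).map f).prod = ∏ k ∈ J, f (l.get k) := by
  classical
  have hJ : ((List.finRange l.length).filter (· ∈ J)).toFinset = J := by ext; simp
  rw [select, List.map_map, ← List.prod_toFinset _ ((List.nodup_finRange _).filter _), hJ]
  rfl

theorem bind₁_intCast_mul_X_billey {B W : Type} [Group W] {M : CoxeterMatrix B}
    (cs : CoxeterSystem M W) {A A' : B → B → ℤ} {d : B → ℤ}
    (hd : ∀ i j, A i j * d j = d i * A' i j) (w : W) (c : ℤ)
    (hc : ∀ l', IsReducedWordFor cs l' w → (l'.map d).prod = c) (l : List B) :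
    bind₁ (fun i => (d i : MvPolynomial B ℤ) * X i) (billey cs A' w l)
      = (c : MvPolynomial B ℤ) * billey cs A w l := by
  unfold billey
  rw [map_sum, Finset.mul_sum]
  refine Finset.sum_congr rfl fun J _ => ?_
  split_ifs with hJ
  · rw [map_prod]
    simp_rw [bind₁_intCast_mul_X_toPoly, pointwise_smul_rootOf hd, toPoly_smul]
    rw [Finset.prod_mul_distrib, ← Int.cast_prod, ← prod_map_select, hc _ hJ]
  · simp

section BCRescaling

variable {n : ℕ}

def bcScale (i : Fin n) : ℤ := if (i : ℕ) = 0 then 2 else 1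

theorem cartanB_mul_bcScale (i j : Fin n) :
    cartanB n i j * bcScale j = bcScale i * cartanC n i j := by
  rcases i with ⟨i, hi⟩
  rcases j with ⟨j, hj⟩
  simp only [cartanB, cartanC, bcScale, Fin.mk.injEq]
  split_ifs <;> omega

theorem barSub_eq_bind₁ :
    barSub n = bind₁ fun i => (bcScale i : MvPolynomial (Fin n) ℤ) * X i := by
  unfold barSub bcScale
  congr 1
  ext i
  split_ifs <;> simp

theorem prod_map_bcScale (hn : 0 < n) (l : List (Fin n)) :
    (l.map bcScale).prod = 2 ^ l.count ⟨0, hn⟩ := by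
  induction l with
  | nil => simp
  | cons a t ih =>
    by_cases ha : (a : ℕ) = 0
    · obtain rfl : a = ⟨0, hn⟩ := Fin.ext ha
      simp [bcScale, ih, pow_succ, mul_comm]
    · have ha' : a ≠ ⟨0, hn⟩ := fun h => ha (congrArg Fin.val h)
      simp [bcScale, ha, ha', ih]

end BCRescaling

theorem barSub_billeyC_eq_two_pow_mul_billeyB_general
    {n : ℕ} (hn : 0 < n) {W : Type} [Group W] (cs : CoxeterSystem (BCMatrix n) W)
    (s : W → ℕ)
    (hs : ∀ (w : W) (l : List (Fin n)), IsReducedWordFor cs l w →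
      l.count (⟨0, hn⟩ : Fin n) = s w)
    (w : W) (l : List (Fin n)) :
    barSub n (billey cs (cartanC n) w l) = 2 ^ s w * billey cs (cartanB n) w l := by
  rw [barSub_eq_bind₁, bind₁_intCast_mul_X_billey cs cartanB_mul_bcScale w (2 ^ s w)
    (fun l' hl' => by rw [prod_map_bcScale hn, hs w l' hl']) l]
  rw [Int.cast_pow, Int.cast_ofNat]

/-- Let `𝔅_n` be the hyperoctahedral Weyl group (a group `W` with Coxeter system for
`BCMatrix n`), shared by the type-`B` and type-`C` root systems, and let `s w` be the number
of negative entries of the signed permutation `w`, characterized by the fact that every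
reduced word for `w` contains the generator `s_1` exactly `s w` times.  Then applying the
substitution `γ_1 ↦ 2 β_1`, `γ_i ↦ β_i (i > 1)` to the type-`C` Billey restriction gives
`2^(s w)` times the type-`B` Billey restriction: `overline{ξ_w^C|_x} = 2^(s w) · ξ_w^B|_x`. -/
theorem barSub_billeyC_eq_two_pow_mul_billeyB
    {n : ℕ} (hn : 0 < n) {W : Type} [Group W] (cs : CoxeterSystem (BCMatrix n) W)
    (s : W → ℕ)
    (hs : ∀ (w : W) (l : List (Fin n)), IsReducedWordFor cs l w →
      l.count (⟨0, hn⟩ : Fin n) = s w)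
    (w x : W) (l : List (Fin n)) (hl : IsReducedWordFor cs l x) :
    barSub n (billey cs (cartanC n) w l) = 2 ^ s w * billey cs (cartanB n) w l :=
  barSub_billeyC_eq_two_pow_mul_billeyB_general hn cs s hs w l
end

section
/- If v' covers v in Bruhat order and s_{i_1}⋯s_{i_m} is a reduced word for v', then there is a unique index k with 1 ≤ k ≤ m such that s_{i_1}⋯ŝ_{i_k}⋯s_{i_m} (omitting s_{i_k}) is a reduced word for v, and moreover ξ_{v'}|_{v'} = (s_{i_1}⋯s_{i_{k-1}}(α_{i_k})) · ξ_v|_{v'}, where s_{i_1}⋯s_{i_{k-1}}(α_{i_k}) is a positive root. -/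
open CoxeterSystem MvPolynomial

/-!
Write the cover as `v = t v'`, where the reflection `t` comes from the letter of a reduced word
of `v'` that is missing in a subword for `v`. By the strong exchange condition `t` occurs in the
left inversion sequence of `l'`, and deleting the `k`-th letter of `l'` multiplies `v'` on the
left by the `k`-th entry of that sequence. Since the sequence of a reduced word has no
repetitions, exactly one deletion gives `v`. Consequently `l'` itself and this deletion are the
only subwords of `l'` that are reduced words for `v'` and `v` respectively, so both restrictions
are single products of roots, which differ by the root at position `k`.

Strong exchange is proved with the permutation representation of `W` on `W × ℤˣ` in which
`s_i` acts by `(x, ε) ↦ (s_i x s_i, ±ε)`, with the sign flipped iff `x = s_i`. The sign picked up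
by a word `ω` on `(x, ε)` is the parity of the occurrences of `ω x ω⁻¹` in the left inversion
sequence of `ω`; the braid relations hold because the left inversion sequence of
`(s_i s_{i'})^{m_{ii'}}` is its first half repeated twice.
-/

theorem List.Sublist.exists_eq_eraseIdx {α : Type*} {l₁ l₂ : List α} (h : l₁.Sublist l₂)
    (hlen : l₁.length + 1 = l₂.length) : ∃ j < l₂.length, l₁ = l₂.eraseIdx j := by
  induction h with
  | slnil => simp at hlen
  | @cons l₁ l₂ a h ih =>
    exact ⟨0, by simp, by simp [h.eq_of_length (by simpa using hlen)]⟩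
  | @cons_cons l₁ l₂ a h ih =>
    obtain ⟨j, hj, rfl⟩ := ih (by simpa using hlen)
    exact ⟨j + 1, by simpa using hj, by simp⟩

namespace CoxeterSystem

variable {B W : Type*} [Group W] {M : CoxeterMatrix B} (cs : CoxeterSystem M W)

local prefix:100 "s" => cs.simple
local prefix:100 "π" => cs.wordProd
local prefix:100 "lis" => cs.leftInvSeq

theorem simple_mul_mul_simple_eq_simple_iff (i : B) (t : W) : s i * t * s i = s i ↔ t = s i := by
  rw [mul_assoc, mul_eq_left, mul_eq_one_iff_eq_inv, inv_simple]

theorem wordProd_alternatingWord_add_two_mul (i i' : B) (n : ℕ) :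
    π (alternatingWord i' i (2 * (n + M i i') + 1)) = π (alternatingWord i' i (2 * n + 1)) := by
  have h (m : ℕ) : (2 * m + 1) / 2 = m := by omega
  simp [prod_alternatingWord_eq_mul_pow, h, pow_add, parity_simps]

theorem leftInvSeq_alternatingWord_eq_append (i i' : B) :
    lis (alternatingWord i i' (2 * M i i')) =
      (lis (alternatingWord i i' (2 * M i i'))).take (M i i') ++
        (lis (alternatingWord i i' (2 * M i i'))).take (M i i') := by
  have hlen : ((lis (alternatingWord i i' (2 * M i i'))).take (M i i')).length = M i i' := by
    simp only [List.length_take, length_leftInvSeq, length_alternatingWord, inf_eq_left]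
    omega
  apply List.ext_getElem (by simp only [List.length_append, hlen, length_leftInvSeq,
    length_alternatingWord]; omega)
  intro k hk _
  rw [List.getElem_append]
  split_ifs with hlt
  · simp
  · simp only [List.getElem_take, length_leftInvSeq, length_alternatingWord] at hk ⊢
    obtain ⟨n, rfl⟩ := Nat.exists_eq_add_of_le' (not_lt.mp (hlen ▸ hlt))
    rw [getElem_leftInvSeq_alternatingWord _ _ _ _ _ hk,
      getElem_leftInvSeq_alternatingWord _ _ _ _ _ (by omega)]
    simp only [hlen, Nat.add_sub_cancel]
    exact wordProd_alternatingWord_add_two_mul cs i i' n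

theorem alternatingWord_two_mul (i i' : B) (m : ℕ) :
    alternatingWord i i' (2 * m) = (List.replicate m [i, i']).flatten := by
  induction m with
  | zero => rfl
  | succ m ih =>
    rw [show 2 * (m + 1) = 2 * m + 1 + 1 by ring, alternatingWord_succ', alternatingWord_succ', ih]
    simp [List.replicate_succ, parity_simps]

section ReflectionRepresentation

variable [DecidableEq W]

theorem even_count_leftInvSeq_alternatingWord (i i' : B) (t : W) :
    Even ((lis (alternatingWord i i' (2 * M i i'))).count t) := by
  rw [leftInvSeq_alternatingWord_eq_append, List.count_append]
  exact ⟨_, rfl⟩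

def reflectionSignPerm (i : B) : Equiv.Perm (W × ℤˣ) :=
  Function.Involutive.toPerm
    (fun p => (s i * p.1 * s i, if p.1 = s i then -p.2 else p.2))
    (by
      rintro ⟨t, ε⟩
      have h := cs.simple_mul_mul_simple_eq_simple_iff i t
      dsimp only
      split_ifs <;> simp_all [mul_assoc])

theorem reflectionSignPerm_apply (i : B) (p : W × ℤˣ) :
    cs.reflectionSignPerm i p = (s i * p.1 * s i, if p.1 = s i then -p.2 else p.2) :=
  rfl

theorem prod_map_reflectionSignPerm_apply (ω : List B) (t : W) (ε : ℤˣ) :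
    (ω.map cs.reflectionSignPerm).prod (t, ε) =
      (π ω * t * (π ω)⁻¹, (-1) ^ (lis ω).count (π ω * t * (π ω)⁻¹) * ε) := by
  induction ω with
  | nil => simp
  | cons i ω ih =>
    set x := π ω * t * (π ω)⁻¹
    have hconj : π (i :: ω) * t * (π (i :: ω))⁻¹ = s i * x * s i := by
      simp only [x, wordProd_cons, mul_inv_rev, inv_simple, mul_assoc]
    have hcount : (lis (i :: ω)).count (s i * x * s i) =
        (lis ω).count x + if x = s i then 1 else 0 := by
      rw [leftInvSeq, List.count_cons,
        ← List.count_map_of_injective _ _ (MulAut.conj (s i)).injective x]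
      simp only [MulAut.conj_apply, inv_simple, beq_iff_eq, @eq_comm _ (s i),
        cs.simple_mul_mul_simple_eq_simple_iff]
    rw [List.map_cons, List.prod_cons, Equiv.Perm.mul_apply, ih, reflectionSignPerm_apply, hconj,
      hcount]
    split_ifs <;> simp [pow_succ]

theorem isLiftable_reflectionSignPerm : M.IsLiftable cs.reflectionSignPerm := by
  intro i i'
  have hword : (cs.reflectionSignPerm i * cs.reflectionSignPerm i') ^ M i i' =
      ((alternatingWord i i' (2 * M i i')).map cs.reflectionSignPerm).prod := by
    simp [alternatingWord_two_mul, List.map_flatten, List.prod_flatten, List.map_replicate]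
  have hprod : π (alternatingWord i i' (2 * M i i')) = 1 := by
    simp [prod_alternatingWord_eq_mul_pow]
  ext ⟨t, ε⟩ <;>
    simp [hword, prod_map_reflectionSignPerm_apply, hprod,
      (cs.even_count_leftInvSeq_alternatingWord i i' t).neg_one_pow]

def reflectionSignHom : W →* Equiv.Perm (W × ℤˣ) :=
  cs.lift ⟨cs.reflectionSignPerm, cs.isLiftable_reflectionSignPerm⟩

theorem reflectionSignHom_wordProd_apply (ω : List B) (t : W) (ε : ℤˣ) :
    cs.reflectionSignHom (π ω) (t, ε) =
      (π ω * t * (π ω)⁻¹, (-1) ^ (lis ω).count (π ω * t * (π ω)⁻¹) * ε) := by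
  have : cs.reflectionSignHom (π ω) = (ω.map cs.reflectionSignPerm).prod := by
    rw [wordProd, map_list_prod, List.map_map]
    simp [Function.comp_def, reflectionSignHom, lift_apply_simple]
  rw [this, prod_map_reflectionSignPerm_apply]

theorem reflectionSignHom_apply (w t : W) (ε : ℤˣ) :
    cs.reflectionSignHom w (t, ε) =
      (w * t * w⁻¹, (cs.reflectionSignHom w (t, 1)).2 * ε) := by
  obtain ⟨ω, rfl⟩ := cs.wordProd_surjective w
  simp [reflectionSignHom_wordProd_apply]

theorem reflectionSignHom_simple_apply (i : B) (p : W × ℤˣ) :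
    cs.reflectionSignHom (s i) p = cs.reflectionSignPerm i p := by
  simp [reflectionSignHom, lift_apply_simple]

theorem IsReflection.reflectionSignHom_apply_self {t : W} (ht : cs.IsReflection t) (ε : ℤˣ) :
    cs.reflectionSignHom t (t, ε) = (t, -ε) := by
  obtain ⟨u, i, rfl⟩ := ht
  set η := (cs.reflectionSignHom u⁻¹ (u * s i * u⁻¹, 1)).2
  have hinv (ε' : ℤˣ) : cs.reflectionSignHom u⁻¹ (u * s i * u⁻¹, ε') = (s i, η * ε') := by
    rw [reflectionSignHom_apply, Prod.mk.injEq]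
    exact ⟨by group, rfl⟩
  have hη : (cs.reflectionSignHom u (s i, 1)).2 * η = 1 := by
    have h : cs.reflectionSignHom u (cs.reflectionSignHom u⁻¹ (u * s i * u⁻¹, 1)) =
        (u * s i * u⁻¹, 1) := by
      rw [← Equiv.Perm.mul_apply, ← map_mul, mul_inv_cancel, map_one, Equiv.Perm.one_apply]
    rw [hinv, reflectionSignHom_apply] at h
    simpa using congrArg Prod.snd h
  rw [map_mul, map_mul, Equiv.Perm.mul_apply, Equiv.Perm.mul_apply, hinv,
    reflectionSignHom_simple_apply, reflectionSignPerm_apply, if_pos rfl, reflectionSignHom_apply]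
  simp [mul_assoc, ← mul_assoc _ η, hη]

/-- The strong exchange condition. -/
theorem mem_leftInvSeq_of_isLeftInversion (ω : List B) {t : W}
    (ht : cs.IsLeftInversion (π ω) t) : t ∈ lis ω := by
  obtain ⟨ξ, hξ, hξt⟩ := cs.exists_isReduced (t * π ω)
  have hω : π ω = t * π ξ := by rw [← hξt, ← mul_assoc, ht.1.mul_self, one_mul]
  have hξ_not : t ∉ lis ξ := fun hmem => by
    have := (cs.isLeftInversion_of_mem_leftInvSeq hξ hmem).2
    rw [← hω, ← hξt] at this
    exact lt_asymm this ht.2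
  -- Evaluate the sign of `π ω` at `x` once along `ω`, and once along `π ω = t * π ξ`, where
  -- `π ξ` does not flip it since `t ∉ lis ξ`.
  set x := (π ω)⁻¹ * t * π ω
  have hx : π ω * x * (π ω)⁻¹ = t := by simp only [x]; group
  have hxξ : π ξ * x * (π ξ)⁻¹ = t := by simp only [x, ← hξt]; group
  have hsign : cs.reflectionSignHom (π ω) (x, 1) = (t, -1) := by
    rw [hω, map_mul, Equiv.Perm.mul_apply, reflectionSignHom_wordProd_apply, hxξ,
      List.count_eq_zero.mpr hξ_not, pow_zero, one_mul, ht.1.reflectionSignHom_apply_self]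
  rw [reflectionSignHom_wordProd_apply, hx, mul_one, Prod.mk.injEq] at hsign
  rw [← List.count_pos_iff, Nat.pos_iff_ne_zero]
  intro h0
  simp [h0] at hsign

end ReflectionRepresentation

theorem existsUnique_wordProd_eraseIdx_eq_mul {ω : List B} (hω : cs.IsReduced ω) {t : W}
    (ht : cs.IsLeftInversion (π ω) t) : ∃! k : Fin ω.length, π (ω.eraseIdx k) = t * π ω := by
  classical
  have hdel (k : ℕ) (hk : k < (lis ω).length) : π (ω.eraseIdx k) = (lis ω)[k] * π ω := by
    rw [← getD_leftInvSeq_mul_wordProd, List.getD_eq_getElem]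
  obtain ⟨k, hk, hkt⟩ := List.getElem_of_mem (cs.mem_leftInvSeq_of_isLeftInversion ω ht)
  refine ⟨⟨k, by simpa using hk⟩, show π _ = _ by rw [hdel k hk, hkt], fun j (hj : π _ = _) => ?_⟩
  rw [hdel j (by simp), mul_left_inj, ← hkt] at hj
  exact Fin.ext (hω.nodup_leftInvSeq.getElem_inj_iff.mp hj)

end CoxeterSystem

section

variable {B W : Type} [Group W] {M : CoxeterMatrix B} {cs : CoxeterSystem M W}

theorem IsReducedWordFor.length_eq {l : List B} {w : W} (h : IsReducedWordFor cs l w) :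
    l.length = cs.length w :=
  h.2 ▸ h.1.symm

theorem exists_isLeftInversion_of_bruhatLE {v v' : W} (hvv' : bruhatLE cs v v')
    (hlen : cs.length v' = cs.length v + 1) : ∃ t, cs.IsLeftInversion v' t ∧ v = t * v' := by
  obtain ⟨lv, hlv, lu, hsub, hlu⟩ := hvv'
  obtain ⟨j, hj, rfl⟩ := hsub.exists_eq_eraseIdx (by rw [hlu.length_eq, hlv.length_eq, hlen])
  have hv : v = (cs.leftInvSeq lv).getD j 1 * v' := by
    rw [← hlu.2, ← hlv.2, cs.getD_leftInvSeq_mul_wordProd]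
  refine ⟨_, ⟨cs.isReflection_of_mem_leftInvSeq lv ?_, by rw [← hv]; omega⟩, hv⟩
  rw [List.getD_eq_getElem _ _ (by simpa using hj)]
  exact List.getElem_mem _

theorem isReducedWordFor_eraseIdx_iff {l : List B} {w : W} (hl : cs.length w + 1 = l.length)
    (k : Fin l.length) : IsReducedWordFor cs (l.eraseIdx k) w ↔ cs.wordProd (l.eraseIdx k) = w := by
  refine ⟨And.right, fun h => ⟨?_, h⟩⟩
  rw [CoxeterSystem.IsReduced, h, List.length_eraseIdx_of_lt k.isLt]
  omega

theorem select_univ (l : List B) : select l Finset.univ = l := by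
  simp [select, List.map_get_finRange]

theorem length_select (l : List B) (J : Finset (Fin l.length)) : (select l J).length = J.card := by
  rw [select, List.length_map, ← List.toFinset_card_of_nodup ((List.nodup_finRange _).filter _)]
  congr
  ext
  simp

theorem select_univ_erase (l : List B) (k : Fin l.length) :
    select l (Finset.univ.erase k) = l.eraseIdx k := by
  have hfilter : (List.finRange l.length).filter (· ∈ Finset.univ.erase k) =
      (List.finRange l.length).erase k := by
    rw [(List.nodup_finRange _).erase_eq_filter]
    exact List.filter_congr fun x _ => by simp [bne, Bool.beq_eq_decide_eq]
  rw [select, hfilter, List.erase_eq_eraseIdx_of_idxOf (List.idxOf_finRange k), ← List.eraseIdx_map,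
    List.map_get_finRange]

theorem IsReducedWordFor.card_eq {l : List B} {J : Finset (Fin l.length)} {w : W}
    (hJ : IsReducedWordFor cs (select l J) w) : J.card = cs.length w := by
  rw [← length_select, hJ.length_eq]

theorem billey_eq_prod_of_unique (A : B → B → ℤ) {w : W} {l : List B} (J : Finset (Fin l.length))
    (hJ : IsReducedWordFor cs (select l J) w)
    (huniq : ∀ J', IsReducedWordFor cs (select l J') w → J' = J) :
    billey cs A w l = ∏ k ∈ J, toPoly (rootOf A l k) := by
  rw [billey, Finset.sum_eq_single_of_mem J (Finset.mem_univ _)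
    (fun J' _ hne => if_neg (mt (huniq J') hne)), if_pos hJ]

theorem billey_of_isReducedWordFor (A : B → B → ℤ) {w : W} {l : List B}
    (hl : IsReducedWordFor cs l w) : billey cs A w l = ∏ k, toPoly (rootOf A l k) :=
  billey_eq_prod_of_unique A _ (by rwa [select_univ]) fun J hJ =>
    Finset.eq_univ_of_card J (by rw [hJ.card_eq, ← hl.length_eq, Fintype.card_fin])

theorem billey_of_eraseIdx (A : B → B → ℤ) {v : W} {l : List B} (hl : cs.length v + 1 = l.length)
    (k : Fin l.length) (hk : IsReducedWordFor cs (l.eraseIdx k) v)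
    (huniq : ∀ j : Fin l.length, IsReducedWordFor cs (l.eraseIdx j) v → j = k) :
    billey cs A v l = ∏ j ∈ Finset.univ.erase k, toPoly (rootOf A l j) := by
  refine billey_eq_prod_of_unique A _ (by rwa [select_univ_erase]) fun J hJ => ?_
  obtain ⟨j, hj⟩ : ∃ j, Jᶜ = {j} := Finset.card_eq_one.mp <| by
    rw [Finset.card_compl, hJ.card_eq, Fintype.card_fin]
    omega
  have hJj : J = Finset.univ.erase j := by rw [← Finset.compl_singleton, ← hj, compl_compl]
  rw [hJj, huniq j (by rwa [← select_univ_erase, ← hJj])]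

end

theorem cover_unique_deletion_and_billey_factor_general
    {B : Type} {W : Type} [Group W] {M : CoxeterMatrix B}
    (cs : CoxeterSystem M W) (A : B → B → ℤ)
    (hroots : ∀ l : List B, cs.IsReduced l → ∀ k : Fin l.length, IsPosRoot (rootOf A l k))
    (v v' : W) (hcov : bruhatLE cs v v' ∧ cs.length v' = cs.length v + 1)
    (l' : List B) (hl' : IsReducedWordFor cs l' v') :
    (∃! k : Fin l'.length, IsReducedWordFor cs (l'.eraseIdx k) v) ∧
      ∀ k : Fin l'.length, IsReducedWordFor cs (l'.eraseIdx k) v →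
        billey cs A v' l' = toPoly (rootOf A l' k) * billey cs A v l' ∧
          IsPosRoot (rootOf A l' k) := by
  have hlen : cs.length v + 1 = l'.length := by rw [hl'.length_eq, hcov.2]
  obtain ⟨t, ht, rfl⟩ := exists_isLeftInversion_of_bruhatLE hcov.1 hcov.2
  have huniq : ∃! k : Fin l'.length, IsReducedWordFor cs (l'.eraseIdx k) (t * v') := by
    simpa only [isReducedWordFor_eraseIdx_iff hlen, hl'.2] using
      cs.existsUnique_wordProd_eraseIdx_eq_mul hl'.1 (hl'.2 ▸ ht)
  refine ⟨huniq, fun k hk => ⟨?_, hroots l' hl'.1 k⟩⟩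
  rw [billey_of_isReducedWordFor A hl',
    billey_of_eraseIdx A hlen k hk fun j hj => huniq.unique hj hk]
  exact (Finset.mul_prod_erase _ _ (Finset.mem_univ k)).symm

/-- If `v'` covers `v` in Bruhat order and `l' = (i_1, …, i_m)` is a reduced word for `v'`,
then there is a unique index `k` such that deleting the `k`-th letter of `l'` yields a
reduced word for `v`; moreover for any such `k`,
`ξ_{v'}|_{v'} = (s_{i_1} ⋯ s_{i_{k-1}} (α_{i_k})) · ξ_v|_{v'}`, where
`s_{i_1} ⋯ s_{i_{k-1}} (α_{i_k})` is a positive root. -/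
theorem cover_unique_deletion_and_billey_factor
    {B : Type} [DecidableEq B] {W : Type} [Group W] {M : CoxeterMatrix B}
    (cs : CoxeterSystem M W) (A : B → B → ℤ)
    (hroots : ∀ l : List B, cs.IsReduced l → ∀ k : Fin l.length, IsPosRoot (rootOf A l k))
    (v v' : W) (hcov : bruhatLE cs v v' ∧ cs.length v' = cs.length v + 1)
    (l' : List B) (hl' : IsReducedWordFor cs l' v') :
    (∃! k : Fin l'.length, IsReducedWordFor cs (l'.eraseIdx k) v) ∧
      ∀ k : Fin l'.length, IsReducedWordFor cs (l'.eraseIdx k) v →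
        billey cs A v' l' = toPoly (rootOf A l' k) * billey cs A v l' ∧
          IsPosRoot (rootOf A l' k) :=
  cover_unique_deletion_and_billey_factor_general cs A hroots v v' hcov l' hl'
end
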